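/- arXiv:2511.08757 — 6 statements merged into one kernel-verified Lean document; each statement's English description precedes it below -/
import Mathlib

section
/- Let $\mathbb{F}$ be a field and let $W_1, \ldots, W_n$ be hyperplanes (codimension-1 subspaces) of $\mathbb{F}^n$ with $W_1 \cap \cdots \cap W_n = 0$. Then there exists a basis $v_1, \ldots, v_n$ of $\mathbb{F}^n$ such that $v_i \in W_j$ if and only if $i \neq j$. -/
/-! Each hyperplane `W j` is the kernel of a functional `f j`. Since the `f j` have trivial common
kernel and there are `n` of them, `v ↦ (f j v)_j` is an isomorphism onto `Fⁿ`, and the preimages of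
the standard basis vectors satisfy `f j (v i) = δ i j`. -/

open Module

section

variable {K V : Type*} [Field K] [AddCommGroup V] [Module K V] [FiniteDimensional K V]

theorem Submodule.exists_eq_ker_of_finrank_add_one_eq (W : Submodule K V)
    (hW : finrank K W + 1 = finrank K V) : ∃ f : Dual K V, W = LinearMap.ker f := by
  have hlt : W < ⊤ := Submodule.lt_top_of_finrank_lt_finrank (by omega)
  obtain ⟨f, hf0, hle⟩ := W.exists_le_ker_of_lt_top hlt
  have hker_lt : finrank K (LinearMap.ker f) < finrank K V :=
    Submodule.finrank_lt (mt LinearMap.ker_eq_top.1 hf0)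
  exact ⟨f, Submodule.eq_of_le_of_finrank_le hle (by omega)⟩

theorem exists_basis_apply_eq_ite_of_iInf_ker_eq_bot {ι : Type*} [Fintype ι] [DecidableEq ι]
    (f : ι → Dual K V) (hcard : finrank K V = Fintype.card ι)
    (hker : ⨅ i, LinearMap.ker (f i) = ⊥) :
    ∃ b : Basis ι K V, ∀ i j, f j (b i) = if i = j then 1 else 0 := by
  have hinj : Function.Injective (LinearMap.pi f) := by
    rw [← LinearMap.ker_eq_bot, LinearMap.ker_pi, hker]
  let e := LinearMap.linearEquivOfInjective _ hinj (by simpa using hcard)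
  refine ⟨(Pi.basisFun K ι).map e.symm, fun i j => ?_⟩
  have he : LinearMap.pi f (e.symm (Pi.single i 1)) = Pi.single i 1 := e.apply_symm_apply _
  simpa [Pi.single_apply, eq_comm] using congrFun he j

end

theorem stmt0_general (F : Type*) [Field F] (n : ℕ)
    (W : Fin n → Submodule F (Fin n → F))
    (hdim : ∀ i, Module.finrank F (W i) = n - 1)
    (hinter : ⨅ i, W i = ⊥) :
    ∃ b : Module.Basis (Fin n) F (Fin n → F), ∀ i j, b i ∈ W j ↔ i ≠ j := by
  choose f hf using fun i : Fin n =>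
    (W i).exists_eq_ker_of_finrank_add_one_eq (by rw [hdim, Module.finrank_fin_fun]; have := i.pos; omega)
  simp only [hf] at hinter
  obtain ⟨b, hb⟩ := exists_basis_apply_eq_ite_of_iInf_ker_eq_bot f (by simp) hinter
  exact ⟨b, fun i j => by simp [hf, hb]⟩

theorem stmt0 (F : Type*) [Field F] (n : ℕ) (hn : 1 ≤ n)
    (W : Fin n → Submodule F (Fin n → F))
    (hdim : ∀ i, Module.finrank F (W i) = n - 1)
    (hinter : ⨅ i, W i = ⊥) :
    ∃ b : Module.Basis (Fin n) F (Fin n → F), ∀ i j, b i ∈ W j ↔ i ≠ j :=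
  stmt0_general F n W hdim hinter
end

section
/- Let $E_1 \subseteq Gr(n, m_1)$ and $E_2 \subseteq Gr(n, m_2)$ be non-degenerate sets of subspaces of $\mathbb{F}_p^n$ with $m_1 + m_2 < n$. Then the set $E = \{W_1 + W_2 : W_1 \in E_1, W_2 \in E_2, W_1 \cap W_2 = 0\} \subseteq Gr(n, m_1 + m_2)$ is non-degenerate. -/
/-!
Enlarge `V` to a subspace `V₁` of codimension `m₁` and pick `W₁ ∈ E₁` meeting `V₁` trivially.
Then `W₁ ⊕ V` has codimension `m₂`, so some `W₂ ∈ E₂` meets it trivially, and modularity of the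
subspace lattice turns `W₂ ⊓ (W₁ ⊔ V) = ⊥` together with `W₁ ⊓ V = ⊥` into `(W₁ ⊔ W₂) ⊓ V = ⊥`.
-/

open Module Submodule

variable {K M : Type*} [DivisionRing K] [AddCommGroup M] [Module K M] [FiniteDimensional K M]

theorem Submodule.exists_le_finrank_eq (V : Submodule K M) {k : ℕ} (hVk : finrank K V ≤ k)
    (hk : k ≤ finrank K M) : ∃ V', V ≤ V' ∧ finrank K V' = k := by
  induction k, hVk using Nat.le_induction with
  | base => exact ⟨V, le_rfl, rfl⟩
  | succ k _ ih =>
    obtain ⟨V', hVV', rfl⟩ := ih (by omega)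
    have hV'_ne_top : V' ≠ ⊤ := by
      rintro rfl
      rw [finrank_top] at hk
      omega
    obtain ⟨x, -, hx⟩ := SetLike.exists_of_lt hV'_ne_top.lt_top
    exact ⟨V' ⊔ K ∙ x, hVV'.trans le_sup_left, finrank_sup_span_singleton hx⟩

variable (K M) in
def IsNondegenerate (E : Set (Submodule K M)) (m : ℕ) : Prop :=
  ∀ V : Submodule K M, finrank K V = finrank K M - m → ∃ W ∈ E, Disjoint W V

theorem IsNondegenerate.exists_disjoint_sup_disjoint {E₁ E₂ : Set (Submodule K M)} {m₁ m₂ : ℕ}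
    (hm : m₁ + m₂ ≤ finrank K M) (hE₁dim : ∀ W ∈ E₁, finrank K W = m₁)
    (hE₁ : IsNondegenerate K M E₁ m₁) (hE₂ : IsNondegenerate K M E₂ m₂) {V : Submodule K M}
    (hV : finrank K V = finrank K M - (m₁ + m₂)) :
    ∃ W₁ ∈ E₁, ∃ W₂ ∈ E₂, Disjoint W₁ W₂ ∧ Disjoint (W₁ ⊔ W₂) V := by
  obtain ⟨V₁, hVV₁, hV₁⟩ := V.exists_le_finrank_eq (k := finrank K M - m₁) (by omega) (by omega)
  obtain ⟨W₁, hW₁, hW₁V₁⟩ := hE₁ V₁ hV₁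
  have hW₁V : Disjoint W₁ V := hW₁V₁.mono_right hVV₁
  have hW₁V_rank : finrank K ↥(W₁ ⊔ V) = finrank K M - m₂ := by
    have := finrank_sup_add_finrank_inf_eq W₁ V
    rw [hW₁V.eq_bot, finrank_bot, hE₁dim W₁ hW₁, hV] at this
    omega
  obtain ⟨W₂, hW₂, hW₂W₁V⟩ := hE₂ _ hW₁V_rank
  refine ⟨W₁, hW₁, W₂, hW₂, (hW₂W₁V.mono_right le_sup_left).symm, ?_⟩
  rw [sup_comm]
  exact hW₁V.disjoint_sup_left_of_disjoint_sup_right hW₂W₁V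

theorem stmt4_general (p n m₁ m₂ : ℕ) (hp : p.Prime) (hmn : m₁ + m₂ < n)
    (E₁ E₂ : Set (Submodule (ZMod p) (Fin n → ZMod p)))
    (hE₁dim : ∀ W ∈ E₁, Module.finrank (ZMod p) W = m₁)
    (hE₁nd : ∀ V : Submodule (ZMod p) (Fin n → ZMod p),
      Module.finrank (ZMod p) V = n - m₁ → ∃ W ∈ E₁, W ⊓ V = ⊥)
    (hE₂nd : ∀ V : Submodule (ZMod p) (Fin n → ZMod p),
      Module.finrank (ZMod p) V = n - m₂ → ∃ W ∈ E₂, W ⊓ V = ⊥) :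
    ∀ V : Submodule (ZMod p) (Fin n → ZMod p),
      Module.finrank (ZMod p) V = n - (m₁ + m₂) →
      ∃ W₁ ∈ E₁, ∃ W₂ ∈ E₂, W₁ ⊓ W₂ = ⊥ ∧ (W₁ ⊔ W₂) ⊓ V = ⊥ := by
  have : Fact p.Prime := ⟨hp⟩
  have hrank : finrank (ZMod p) (Fin n → ZMod p) = n := by simp
  have nondeg {E : Set (Submodule (ZMod p) (Fin n → ZMod p))} {m : ℕ}
      (h : ∀ V : Submodule (ZMod p) (Fin n → ZMod p), finrank (ZMod p) V = n - m →
        ∃ W ∈ E, W ⊓ V = ⊥) : IsNondegenerate (ZMod p) (Fin n → ZMod p) E m := fun V hV => by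
    rw [hrank] at hV
    simpa only [disjoint_iff] using h V hV
  intro V hV
  obtain ⟨W₁, hW₁, W₂, hW₂, hW₁W₂, hW₁W₂V⟩ := (nondeg hE₁nd).exists_disjoint_sup_disjoint
    (by rw [hrank]; omega) hE₁dim (nondeg hE₂nd) (by rwa [hrank])
  exact ⟨W₁, hW₁, W₂, hW₂, hW₁W₂.eq_bot, hW₁W₂V.eq_bot⟩

theorem stmt4 (p n m₁ m₂ : ℕ) (hp : p.Prime) (hmn : m₁ + m₂ < n)
    (E₁ E₂ : Set (Submodule (ZMod p) (Fin n → ZMod p)))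
    (hE₁dim : ∀ W ∈ E₁, Module.finrank (ZMod p) W = m₁)
    (hE₂dim : ∀ W ∈ E₂, Module.finrank (ZMod p) W = m₂)
    (hE₁nd : ∀ V : Submodule (ZMod p) (Fin n → ZMod p),
      Module.finrank (ZMod p) V = n - m₁ → ∃ W ∈ E₁, W ⊓ V = ⊥)
    (hE₂nd : ∀ V : Submodule (ZMod p) (Fin n → ZMod p),
      Module.finrank (ZMod p) V = n - m₂ → ∃ W ∈ E₂, W ⊓ V = ⊥) :
    ∀ V : Submodule (ZMod p) (Fin n → ZMod p),
      Module.finrank (ZMod p) V = n - (m₁ + m₂) →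
      ∃ W₁ ∈ E₁, ∃ W₂ ∈ E₂, W₁ ⊓ W₂ = ⊥ ∧ (W₁ ⊔ W₂) ⊓ V = ⊥ :=
  stmt4_general p n m₁ m₂ hp hmn E₁ E₂ hE₁dim hE₁nd hE₂nd
end

section
/- For integers $m, m' \geq 1$ with $m + m' \leq n$ and any subspace $V \in Gr(n, m')$ of $\mathbb{F}_p^n$, the number of $m$-dimensional subspaces $W$ with $W \cap V \neq 0$ is at most $C \cdot p^{m' - 1 + (m-1)(n-m)}$ for an absolute constant $C$ depending only on $n$ (e.g., $C = 2^n$ suffices). -/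
/-!
Counting linearly independent `k`-tuples in `𝔽_q^N` according to their span gives
`|Gr(N,k)| · ∏_{i<k} (q^k - q^i) = ∏_{i<k} (q^N - q^i)`, and comparing the factors one by one
gives `|Gr(N,k)| ≤ 2^k q^{k(N-k)}`. A subspace `W` meeting `V` nontrivially contains a line
`L ≤ V`. There are at most `2 q^{m'-1}` such lines, and for each of them the `m`-dimensional
`W ≥ L` embed into the `(m-1)`-dimensional subspaces of the `(n-1)`-dimensional space `𝔽_q^n ⧸ L`,
of which there are at most `2^{m-1} q^{(m-1)(n-m)}`.
-/

open Module

theorem Nat.pow_sub_pow_le_two_mul_pow_sub_mul {q N k i : ℕ} (hq : 2 ≤ q) (hi : i < k)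
    (hk : k ≤ N) : q ^ N - q ^ i ≤ 2 * q ^ (N - k) * (q ^ k - q ^ i) := by
  have hN : q ^ (N - k) * q ^ k = q ^ N := by rw [← pow_add, Nat.sub_add_cancel hk]
  have hik : 2 * q ^ i ≤ q ^ k := calc
    2 * q ^ i ≤ q * q ^ i := Nat.mul_le_mul_right _ hq
    _ = q ^ (i + 1) := Nat.pow_succ'.symm
    _ ≤ q ^ k := Nat.pow_le_pow_right (by omega) hi
  have h : 2 * (q ^ (N - k) * q ^ i) ≤ q ^ N := by
    rw [← hN, mul_left_comm]; exact Nat.mul_le_mul_left _ hik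
  rw [mul_assoc, Nat.mul_sub, hN]
  omega

theorem Nat.prod_pow_sub_pow_le {q N k : ℕ} (hq : 2 ≤ q) (hk : k ≤ N) :
    ∏ i : Fin k, (q ^ N - q ^ (i : ℕ)) ≤
      2 ^ k * q ^ (k * (N - k)) * ∏ i : Fin k, (q ^ k - q ^ (i : ℕ)) := by
  calc ∏ i : Fin k, (q ^ N - q ^ (i : ℕ))
      ≤ ∏ i : Fin k, (2 * q ^ (N - k) * (q ^ k - q ^ (i : ℕ))) :=
        Finset.prod_le_prod' fun i _ => pow_sub_pow_le_two_mul_pow_sub_mul hq i.2 hk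
    _ = _ := by
        rw [Finset.prod_mul_distrib, Finset.prod_const, Finset.card_univ, Fintype.card_fin,
          mul_pow, ← pow_mul, mul_comm (N - k)]

namespace Submodule

variable {K M : Type*} [Field K] [AddCommGroup M] [Module K M]

def linearIndependentSpanEqEquiv [FiniteDimensional K M] {k : ℕ} (W : Submodule K M)
    (hW : finrank K W = k) :
    {s : {s : Fin k → M // LinearIndependent K s} // span K (Set.range s.1) = W} ≃
      {t : Fin k → W // LinearIndependent K t} where
  toFun s := ⟨fun i => ⟨s.1.1 i, s.2.le (subset_span (Set.mem_range_self i))⟩,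
    .of_comp W.subtype s.1.2⟩
  invFun t := ⟨⟨W.subtype ∘ t.1, t.2.map' W.subtype W.ker_subtype⟩, by
    rw [Set.range_comp, span_image, t.2.span_eq_top_of_card_eq_finrank' (by simp [hW]),
      map_subtype_top]⟩
  left_inv _ := rfl
  right_inv _ := rfl

theorem finrank_map_mkQ_add_finrank [FiniteDimensional K M] {L W : Submodule K M} (h : L ≤ W) :
    finrank K (W.map L.mkQ) + finrank K L = finrank K W := by
  rw [← LinearMap.finrank_range_add_finrank_ker (L.mkQ.domRestrict W),
    LinearMap.range_domRestrict, LinearMap.ker_domRestrict, ker_mkQ,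
    (comapSubtypeEquivOfLe h).finrank_eq]

theorem ncard_le_and_finrank_eq_le_ncard_quotient [Finite M] (L : Submodule K M) (m : ℕ) :
    {W : Submodule K M | L ≤ W ∧ finrank K W = m}.ncard ≤
      {W : Submodule K (M ⧸ L) | finrank K W = m - finrank K L}.ncard := by
  have : Finite (M ⧸ L) := Finite.of_surjective _ L.mkQ_surjective
  refine Set.ncard_le_ncard_of_injOn (map L.mkQ) ?_ ?_
  · rintro W ⟨hLW, rfl⟩
    exact Nat.eq_sub_of_add_eq (finrank_map_mkQ_add_finrank hLW)
  · rintro W ⟨hLW, -⟩ W' ⟨hLW', -⟩ h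
    rw [← sup_eq_right.2 hLW, ← sup_eq_right.2 hLW', ← comap_map_mkQ, h, comap_map_mkQ]

variable [Fintype K] [Finite M]

local notation "q" => Fintype.card K

theorem ncard_finrank_eq_mul_prod {k : ℕ} (hk : k ≤ finrank K M) :
    {W : Submodule K M | finrank K W = k}.ncard * ∏ i : Fin k, (q ^ k - q ^ (i : ℕ)) =
      ∏ i : Fin k, (q ^ finrank K M - q ^ (i : ℕ)) := by
  let f : {s : Fin k → M // LinearIndependent K s} → {W : Submodule K M | finrank K W = k} :=
    fun s => ⟨span K (Set.range s.1), finrank_span_eq_card s.2 |>.trans (Fintype.card_fin k)⟩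
  have := Fintype.ofFinite {W : Submodule K M | finrank K W = k}
  rw [← card_linearIndependent hk, ← Nat.card_congr (Equiv.sigmaFiberEquiv f), Nat.card_sigma,
    ← Nat.card_coe_set_eq, Nat.card_eq_fintype_card, ← Finset.card_univ, ← smul_eq_mul,
    ← Finset.sum_const]
  refine Finset.sum_congr rfl fun W _ => ?_
  rw [Nat.card_congr ((Equiv.subtypeEquivRight fun s => Subtype.ext_iff).trans
    (linearIndependentSpanEqEquiv W.1 W.2)), card_linearIndependent W.2.ge, W.2]

theorem ncard_finrank_eq_le (k : ℕ) :
    {W : Submodule K M | finrank K W = k}.ncard ≤ 2 ^ k * q ^ (k * (finrank K M - k)) := by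
  rcases le_or_gt k (finrank K M) with hk | hk
  · have hq : 2 ≤ q := Fintype.one_lt_card
    have hpos : 0 < ∏ i : Fin k, (q ^ k - q ^ (i : ℕ)) :=
      Finset.prod_pos fun i _ => Nat.sub_pos_of_lt (Nat.pow_lt_pow_right hq i.2)
    refine Nat.le_of_mul_le_mul_right ?_ hpos
    rw [ncard_finrank_eq_mul_prod hk]
    exact Nat.prod_pow_sub_pow_le hq hk
  · rw [(Set.ncard_eq_zero).2 (Set.eq_empty_of_forall_notMem fun W hW => ?_)]
    · exact Nat.zero_le _
    · exact hk.not_ge (hW ▸ W.finrank_le)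

theorem ncard_finrank_eq_inf_ne_bot_le (V : Submodule K M) {m : ℕ} (hm : 1 ≤ m) :
    {W : Submodule K M | finrank K W = m ∧ W ⊓ V ≠ ⊥}.ncard ≤
      2 ^ m * q ^ (finrank K V - 1 + (m - 1) * (finrank K M - m)) := by
  set lines := {L : Submodule K V | finrank K L = 1}
  have := Fintype.ofFinite lines
  have hcover : {W : Submodule K M | finrank K W = m ∧ W ⊓ V ≠ ⊥} ⊆
      ⋃ L ∈ lines.toFinset, {W | L.map V.subtype ≤ W ∧ finrank K W = m} := by
    rintro W ⟨hWm, hWV⟩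
    obtain ⟨v, hv, hv0⟩ := exists_mem_ne_zero_of_ne_bot hWV
    refine Set.mem_biUnion (x := K ∙ ⟨v, hv.2⟩) ?_ ⟨?_, hWm⟩
    · simpa [lines] using finrank_span_singleton (K := K) (v := (⟨v, hv.2⟩ : V))
        (by simpa using hv0)
    · simpa [map_span] using hv.1
  have hfiber : ∀ L ∈ lines.toFinset,
      {W | L.map V.subtype ≤ W ∧ finrank K W = m}.ncard ≤
        2 ^ (m - 1) * q ^ ((m - 1) * (finrank K M - m)) := by
    intro L hL
    have : Finite (M ⧸ L.map V.subtype) := Finite.of_surjective _ (mkQ_surjective _)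
    have hL1 : finrank K (L.map V.subtype) = 1 := by
      rw [finrank_map_subtype_eq]; simpa [lines] using hL
    have hquot : finrank K (M ⧸ L.map V.subtype) = finrank K M - 1 := by
      rw [finrank_quotient, hL1]
    calc _ ≤ _ := ncard_le_and_finrank_eq_le_ncard_quotient _ m
      _ ≤ _ := ncard_finrank_eq_le _
      _ = _ := by rw [hL1, hquot, show finrank K M - 1 - (m - 1) = finrank K M - m by omega]
  calc _ ≤ _ := Set.ncard_le_ncard hcover
    _ ≤ _ := Finset.set_ncard_biUnion_le _ _
    _ ≤ lines.toFinset.card * (2 ^ (m - 1) * q ^ ((m - 1) * (finrank K M - m))) :=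
        Finset.sum_le_card_nsmul _ _ _ hfiber
    _ ≤ 2 ^ 1 * q ^ (1 * (finrank K V - 1)) *
          (2 ^ (m - 1) * q ^ ((m - 1) * (finrank K M - m))) := by
        rw [← Set.ncard_eq_toFinset_card']
        exact Nat.mul_le_mul_right _ (ncard_finrank_eq_le 1)
    _ = _ := by
        rw [pow_add, show 2 ^ m = 2 ^ 1 * 2 ^ (m - 1) by rw [← pow_add, Nat.add_sub_cancel' hm]]
        ring

end Submodule

theorem stmt8_general (p n m m' : ℕ) (hp : p.Prime) (hm : 1 ≤ m)
    (hmn : m + m' ≤ n)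
    (V : Submodule (ZMod p) (Fin n → ZMod p))
    (hV : Module.finrank (ZMod p) V = m') :
    {W : Submodule (ZMod p) (Fin n → ZMod p) |
        Module.finrank (ZMod p) W = m ∧ W ⊓ V ≠ ⊥}.ncard ≤
      2 ^ n * p ^ (m' - 1 + (m - 1) * (n - m)) := by
  have : Fact p.Prime := ⟨hp⟩
  calc _ ≤ _ := Submodule.ncard_finrank_eq_inf_ne_bot_le V hm
    _ ≤ _ := by
      rw [ZMod.card, hV, finrank_fin_fun]
      exact Nat.mul_le_mul_right _ (Nat.pow_le_pow_right two_pos (by omega))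

theorem stmt8 (p n m m' : ℕ) (hp : p.Prime) (hm : 1 ≤ m) (hm' : 1 ≤ m')
    (hmn : m + m' ≤ n)
    (V : Submodule (ZMod p) (Fin n → ZMod p))
    (hV : Module.finrank (ZMod p) V = m') :
    {W : Submodule (ZMod p) (Fin n → ZMod p) |
        Module.finrank (ZMod p) W = m ∧ W ⊓ V ≠ ⊥}.ncard ≤
      2 ^ n * p ^ (m' - 1 + (m - 1) * (n - m)) :=
  stmt8_general p n m m' hp hm hmn V hV
end

section
/- Let $S \subseteq \{1, \ldots, n-1\}$ be nonempty and suppose $S$ is not contained in $d\mathbb{Z}$ for any divisor $d > 1$ of $n$. Let $S'$ be the smallest subset of $\{1, \ldots, n-1\}$ containing $S$ and closed under the operations $(m_1, m_2) \mapsto m_1 + m_2$ whenever $m_1 + m_2 \leq n - 1$ and $(m_1, m_2) \mapsto m_1 + m_2 - n$ whenever $m_1 + m_2 - n \geq 1$. Then $1 \in S'$. -/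
/-!
Identify `{1, …, n-1}` with the nonzero residues mod `n`. Then `{0} ∪ S'` contains the additive
submonoid of `ZMod n` generated by `S`, which in a finite group is the subgroup generated by `S`.
Its preimage in `ℤ` is `aℤ` for some `a` dividing `n` and every element of `S`, so `a = ±1` and
the subgroup contains `1`.
-/

namespace ZMod

theorem one_mem_addSubgroupClosure_natCast {n : ℕ} (hn : n ≠ 0) {S : Set ℕ}
    (hdiv : ¬ ∃ d, d ∣ n ∧ 1 < d ∧ ∀ s ∈ S, d ∣ s) :
    (1 : ZMod n) ∈ AddSubgroup.closure (((↑) : ℕ → ZMod n) '' S) := by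
  set H := AddSubgroup.closure (((↑) : ℕ → ZMod n) '' S)
  obtain ⟨a, ha⟩ := Int.subgroup_cyclic (H.comap (Int.castAddHom (ZMod n)))
  have mem_iff (z : ℤ) : (z : ZMod n) ∈ H ↔ a ∣ z := by
    rw [← Int.mem_zmultiples_iff, AddSubgroup.zmultiples_eq_closure, ← ha]
    rfl
  have ha_n : a.natAbs ∣ n := Int.natAbs_dvd_natAbs.mpr ((mem_iff n).mp (by simp [H.zero_mem]))
  have ha_S : ∀ s ∈ S, a.natAbs ∣ s := fun s hs =>
    Int.natAbs_dvd_natAbs.mpr <|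
      (mem_iff s).mp (AddSubgroup.subset_closure ⟨s, hs, (Int.cast_natCast s).symm⟩)
  have ha_one : a.natAbs = 1 := by
    have : a.natAbs ≠ 0 := fun h => hn (Nat.eq_zero_of_zero_dvd (h ▸ ha_n))
    by_contra h
    exact hdiv ⟨a.natAbs, ha_n, by omega, ha_S⟩
  simpa using (mem_iff 1).mpr (Int.natAbs_dvd_natAbs.mp (by simp [ha_one]))

section Closure

variable {n : ℕ} [NeZero n] {S' : Set ℕ}
  (hadd : ∀ a ∈ S', ∀ b ∈ S', a + b ≤ n - 1 → a + b ∈ S')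
  (hsub : ∀ a ∈ S', ∀ b ∈ S', n + 1 ≤ a + b → a + b - n ∈ S')
include hadd hsub

theorem eq_zero_or_val_mem_add {x y : ZMod n} (hx : x = 0 ∨ x.val ∈ S')
    (hy : y = 0 ∨ y.val ∈ S') : x + y = 0 ∨ (x + y).val ∈ S' := by
  rcases hx with rfl | hx
  · simpa using hy
  rcases hy with rfl | hy
  · simpa using Or.inr hx
  have hxn := x.val_lt
  have hyn := y.val_lt
  rw [← val_eq_zero, val_add]
  rcases lt_trichotomy (x.val + y.val) n with hlt | heq | hgt
  · rw [Nat.mod_eq_of_lt hlt]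
    exact Or.inr (hadd _ hx _ hy (by omega))
  · simp [heq]
  · rw [Nat.mod_eq_sub_mod hgt.le, Nat.mod_eq_of_lt (by omega)]
    exact Or.inr (hsub _ hx _ hy (by omega))

theorem eq_zero_or_val_mem_of_mem_addSubmonoidClosure {S : Set ℕ} (hSlt : ∀ s ∈ S, s < n)
    (hSS' : S ⊆ S') {x : ZMod n} (hx : x ∈ AddSubmonoid.closure (((↑) : ℕ → ZMod n) '' S)) :
    x = 0 ∨ x.val ∈ S' := by
  induction hx using AddSubmonoid.closure_induction with
  | mem _ h =>
    obtain ⟨s, hs, rfl⟩ := h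
    exact Or.inr (by rw [val_natCast_of_lt (hSlt s hs)]; exact hSS' hs)
  | zero => exact Or.inl rfl
  | add _ _ _ _ hx hy => exact eq_zero_or_val_mem_add hadd hsub hx hy

end Closure

end ZMod

theorem stmt10_general (n : ℕ) (hn : 2 ≤ n) (S : Set ℕ)
    (hSsub : S ⊆ Set.Icc 1 (n - 1))
    (hdiv : ¬ ∃ d, d ∣ n ∧ 1 < d ∧ ∀ s ∈ S, d ∣ s)
    (S' : Set ℕ) (hSS' : S ⊆ S')
    (hadd : ∀ a ∈ S', ∀ b ∈ S', a + b ≤ n - 1 → a + b ∈ S')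
    (hsub : ∀ a ∈ S', ∀ b ∈ S', n + 1 ≤ a + b → a + b - n ∈ S') :
    1 ∈ S' := by
  have : Fact (1 < n) := ⟨hn⟩
  have h_one : (1 : ZMod n) ∈ AddSubmonoid.closure (((↑) : ℕ → ZMod n) '' S) := by
    rw [← AddSubgroup.closure_toAddSubmonoid_of_finite]
    exact ZMod.one_mem_addSubgroupClosure_natCast (by omega) hdiv
  have hSlt : ∀ s ∈ S, s < n := fun s hs => by have := (hSsub hs).2; omega
  simpa [ZMod.val_one] using
    ZMod.eq_zero_or_val_mem_of_mem_addSubmonoidClosure hadd hsub hSlt hSS' h_one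

theorem stmt10 (n : ℕ) (hn : 2 ≤ n) (S : Set ℕ) (hS : S.Nonempty)
    (hSsub : S ⊆ Set.Icc 1 (n - 1))
    (hdiv : ¬ ∃ d, d ∣ n ∧ 1 < d ∧ ∀ s ∈ S, d ∣ s)
    (S' : Set ℕ) (hSS' : S ⊆ S')
    (hadd : ∀ a ∈ S', ∀ b ∈ S', a + b ≤ n - 1 → a + b ∈ S')
    (hsub : ∀ a ∈ S', ∀ b ∈ S', n + 1 ≤ a + b → a + b - n ∈ S') :
    1 ∈ S' :=
  stmt10_general n hn S hSsub hdiv S' hSS' hadd hsub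
end

section
/- Let $W_1, W_2$ be subspaces of $\mathbb{F}_p^n$ with $W_1 \cap W_2 = 0$, and $K \subseteq \mathbb{F}_p^n$ a finite nonempty set. Then $|K|^3 \leq |\pi^{W_1}(K)| \cdot |\pi^{W_2}(K)| \cdot \sum_{c \in \mathbb{F}_p^n/(W_1+W_2)} |K \cap \pi_{W_1+W_2}^{-1}(c)|^2$, i.e. the cube of $|K|$ is bounded by the product of the sizes of the two projections times the sum of squared fiber sizes of the projection mod $W_1 + W_2$. -/
/-!
Split `K` into its fibres `K_c` over `V ⧸ (W₁ ⊔ W₂)`. Since `W₁ ⊓ W₂ = ⊥`, the map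
`x ↦ (x mod W₁, x mod W₂)` is injective, so `|K_c| ≤ |π₁ K_c| |π₂ K_c|`; since `Wᵢ ≤ W₁ ⊔ W₂`, the
sets `πᵢ K_c` are disjoint for distinct `c`, so `∑_c |πᵢ K_c| ≤ |πᵢ K|`. These combine through the
Hölder-type inequality `(∑ u)³ ≤ (∑ a)(∑ b)(∑ u²)` for `0 ≤ u ≤ a b`, which follows from AM-GM
applied to each triple of indices.
-/

theorem three_mul_le_add_add_of_pow_three_le_mul {R : Type*} [CommRing R] [LinearOrder R]
    [IsStrictOrderedRing R] {w x y z : R} (hx : 0 ≤ x) (hy : 0 ≤ y)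
    (hz : 0 ≤ z) (h : w ^ 3 ≤ x * y * z) : 3 * w ≤ x + y + z := by
  by_contra! hlt
  have amgm : 27 * (x * y * z) ≤ (x + y + z) ^ 3 := by
    nlinarith [mul_nonneg hx (sq_nonneg (y - z)), mul_nonneg hy (sq_nonneg (x - z)),
      mul_nonneg hz (sq_nonneg (x - y)), mul_nonneg (add_nonneg (add_nonneg hx hy) hz)
        (add_nonneg (add_nonneg (sq_nonneg (x - y)) (sq_nonneg (y - z))) (sq_nonneg (x - z)))]
  have := pow_lt_pow_left₀ hlt (by positivity) three_ne_zero
  nlinarith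

namespace Finset

variable {ι R : Type*}

theorem sum_mul_sum_mul_sum [CommSemiring R] (s : Finset ι) (f g h : ι → R) :
    (∑ i ∈ s, f i) * (∑ i ∈ s, g i) * ∑ i ∈ s, h i =
      ∑ i ∈ s, ∑ j ∈ s, ∑ k ∈ s, f i * g j * h k := by
  rw [sum_mul_sum, sum_mul]
  refine sum_congr rfl fun i _ => ?_
  rw [sum_mul]
  exact sum_congr rfl fun j _ => mul_sum ..

theorem sum_pow_three_le_of_le_mul [CommRing R] [LinearOrder R] [IsStrictOrderedRing R]
    (s : Finset ι) {u a b : ι → R} (hu : ∀ i ∈ s, 0 ≤ u i) (ha : ∀ i ∈ s, 0 ≤ a i)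
    (hb : ∀ i ∈ s, 0 ≤ b i) (hab : ∀ i ∈ s, u i ≤ a i * b i) :
    (∑ i ∈ s, u i) ^ 3 ≤ (∑ i ∈ s, a i) * (∑ i ∈ s, b i) * ∑ i ∈ s, u i ^ 2 := by
  have amgm : ∀ i ∈ s, ∀ j ∈ s, ∀ k ∈ s, 3 * (u i * u j * u k) ≤
      a i * b j * u k ^ 2 + a j * b k * u i ^ 2 + a k * b i * u j ^ 2 := by
    intro i hi j hj k hk
    -- the product of the three summands dominates `(u i * u j * u k) ^ 3`
    have := hu i hi; have := hu j hj; have := hu k hk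
    have := (hu i hi).trans (hab i hi); have := (hu j hj).trans (hab j hj)
    refine three_mul_le_add_add_of_pow_three_le_mul
      (mul_nonneg (mul_nonneg (ha i hi) (hb j hj)) (sq_nonneg _))
      (mul_nonneg (mul_nonneg (ha j hj) (hb k hk)) (sq_nonneg _))
      (mul_nonneg (mul_nonneg (ha k hk) (hb i hi)) (sq_nonneg _)) ?_
    calc (u i * u j * u k) ^ 3 = (u i * u j * u k) * (u i * u j * u k) ^ 2 := by ring
      _ ≤ (a i * b i) * (a j * b j) * (a k * b k) * (u i * u j * u k) ^ 2 := by
        gcongr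
        · exact hab i hi
        · exact hab j hj
        · exact hab k hk
      _ = a i * b j * u k ^ 2 * (a j * b k * u i ^ 2) * (a k * b i * u j ^ 2) := by ring
  have lhs : ∑ i ∈ s, ∑ j ∈ s, ∑ k ∈ s, 3 * (u i * u j * u k) = 3 * (∑ i ∈ s, u i) ^ 3 := by
    rw [pow_three', sum_mul_sum_mul_sum]
    simp only [mul_sum]
  have rhs : ∑ i ∈ s, ∑ j ∈ s, ∑ k ∈ s,
      (a i * b j * u k ^ 2 + a j * b k * u i ^ 2 + a k * b i * u j ^ 2) =
      3 * ((∑ i ∈ s, a i) * (∑ i ∈ s, b i) * ∑ i ∈ s, u i ^ 2) := by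
    have h₂ := sum_mul_sum_mul_sum s (fun i => u i ^ 2) a b
    have h₃ := sum_mul_sum_mul_sum s b (fun i => u i ^ 2) a
    simp only [sum_add_distrib, ← sum_mul_sum_mul_sum]
    simp only [mul_comm, mul_left_comm, mul_assoc] at h₂ h₃ ⊢
    rw [← h₂, ← h₃]
    ring
  have := sum_le_sum fun i hi => sum_le_sum fun j hj => sum_le_sum fun k hk => amgm i hi j hj k hk
  rw [lhs, rhs] at this
  exact le_of_mul_le_mul_left this three_pos

variable {α β γ δ : Type*}

theorem card_le_card_image_mul_card_image [DecidableEq β] [DecidableEq γ] (s : Finset α)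
    {f : α → β} {g : α → γ} (h : Set.InjOn (fun x => (f x, g x)) s) :
    #s ≤ #(s.image f) * #(s.image g) :=
  calc #s = #(s.image fun x => (f x, g x)) := (card_image_of_injOn h).symm
    _ ≤ #(s.image f ×ˢ s.image g) := card_le_card fun _ hz => by
      obtain ⟨x, hx, rfl⟩ := mem_image.1 hz
      exact mem_product.2 ⟨mem_image_of_mem f hx, mem_image_of_mem g hx⟩
    _ = #(s.image f) * #(s.image g) := card_product _ _

theorem sum_card_image_filter_le [DecidableEq β] [DecidableEq γ] (s : Finset α) (t : Finset γ)
    {f : α → β} {q : α → γ} (hq : ∀ x y, f x = f y → q x = q y) :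
    ∑ c ∈ t, #((s.filter (q · = c)).image f) ≤ #(s.image f) := by
  rw [← card_biUnion]
  · exact card_le_card (biUnion_subset.2 fun c _ => image_subset_image (filter_subset _ s))
  · intro c _ c' _ hcc'
    refine disjoint_left.2 fun z hz hz' => hcc' ?_
    obtain ⟨x, hx, rfl⟩ := mem_image.1 hz
    obtain ⟨y, hy, hxy⟩ := mem_image.1 hz'
    rw [← (mem_filter.1 hx).2, ← (mem_filter.1 hy).2, hq y x hxy]

theorem card_pow_three_le [DecidableEq β] [DecidableEq γ] [DecidableEq δ]
    (s : Finset α) {f : α → β} {g : α → γ} {q : α → δ}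
    (hinj : Set.InjOn (fun x => (f x, g x)) s)
    (hf : ∀ x y, f x = f y → q x = q y) (hg : ∀ x y, g x = g y → q x = q y) :
    #s ^ 3 ≤ #(s.image f) * #(s.image g) * ∑ c ∈ s.image q, #(s.filter (q · = c)) ^ 2 := by
  have fiber : ∀ c, #(s.filter (q · = c)) ≤ #((s.filter (q · = c)).image f) *
      #((s.filter (q · = c)).image g) := fun c =>
    card_le_card_image_mul_card_image _ (hinj.mono (filter_subset _ s))
  zify
  calc ((#s : ℕ) : ℤ) ^ 3 = (∑ c ∈ s.image q, (#(s.filter (q · = c)) : ℤ)) ^ 3 := by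
        rw [card_eq_sum_card_image q s, Nat.cast_sum]
    _ ≤ (∑ c ∈ s.image q, (#((s.filter (q · = c)).image f) : ℤ)) *
        (∑ c ∈ s.image q, (#((s.filter (q · = c)).image g) : ℤ)) *
          ∑ c ∈ s.image q, (#(s.filter (q · = c)) : ℤ) ^ 2 :=
      sum_pow_three_le_of_le_mul _ (fun _ _ => by positivity) (fun _ _ => by positivity)
        (fun _ _ => by positivity) (fun c _ => by exact_mod_cast fiber c)
    _ ≤ (#(s.image f) : ℤ) * #(s.image g) * ∑ c ∈ s.image q, (#(s.filter (q · = c)) : ℤ) ^ 2 := by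
      gcongr
      · exact_mod_cast sum_card_image_filter_le s _ hf
      · exact_mod_cast sum_card_image_filter_le s _ hg

end Finset

namespace Submodule

variable {R M : Type*} [Ring R] [AddCommGroup M] [Module R M]

theorem injective_mkQ_prod_mkQ {W₁ W₂ : Submodule R M} (h : W₁ ⊓ W₂ = ⊥) :
    Function.Injective fun x => (W₁.mkQ x, W₂.mkQ x) :=
  (LinearMap.ker_eq_bot (f := W₁.mkQ.prod W₂.mkQ)).1 <| by
    rw [LinearMap.ker_prod, ker_mkQ, ker_mkQ, h]

theorem mkQ_eq_mkQ_of_le {W W' : Submodule R M} (hW : W ≤ W') {x y : M}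
    (h : W.mkQ x = W.mkQ y) : W'.mkQ x = W'.mkQ y := by
  rw [← factor_mk hW, h, factor_mk]

end Submodule

theorem Set.Finite.ncard_pow_three_le {α β γ δ : Type*} {K : Set α} (hK : K.Finite)
    {f : α → β} {g : α → γ} {q : α → δ} (hinj : K.InjOn fun x => (f x, g x))
    (hf : ∀ x y, f x = f y → q x = q y) (hg : ∀ x y, g x = g y → q x = q y) :
    K.ncard ^ 3 ≤ (f '' K).ncard * (g '' K).ncard * ∑ᶠ c, (K ∩ q ⁻¹' {c}).ncard ^ 2 := by
  classical
  lift K to Finset α using hK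
  have fibers : ∑ᶠ c, ((K : Set α) ∩ q ⁻¹' {c}).ncard ^ 2 =
      ∑ c ∈ K.image q, (K.filter (q · = c)).card ^ 2 := by
    have coe_fiber : ∀ c, (K : Set α) ∩ q ⁻¹' {c} = ↑(K.filter (q · = c)) := fun c => by
      ext; simp
    simp only [coe_fiber, Set.ncard_coe_finset]
    exact finsum_eq_sum_of_support_subset _ fun c hc => by simpa using hc
  rw [fibers, ← Finset.coe_image, ← Finset.coe_image]
  simp only [Set.ncard_coe_finset]
  exact K.card_pow_three_le hinj hf hg

theorem stmt12_general (p n : ℕ)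
    (W₁ W₂ : Submodule (ZMod p) (Fin n → ZMod p)) (h : W₁ ⊓ W₂ = ⊥)
    (K : Set (Fin n → ZMod p)) (hK : K.Finite) :
    K.ncard ^ 3 ≤ (W₁.mkQ '' K).ncard * (W₂.mkQ '' K).ncard *
      ∑ᶠ c : (Fin n → ZMod p) ⧸ (W₁ ⊔ W₂),
        (K ∩ (W₁ ⊔ W₂).mkQ ⁻¹' {c}).ncard ^ 2 :=
  hK.ncard_pow_three_le (Submodule.injective_mkQ_prod_mkQ h).injOn
    (fun _ _ => Submodule.mkQ_eq_mkQ_of_le le_sup_left)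
    (fun _ _ => Submodule.mkQ_eq_mkQ_of_le le_sup_right)

theorem stmt12 (p n : ℕ) (hp : p.Prime)
    (W₁ W₂ : Submodule (ZMod p) (Fin n → ZMod p)) (h : W₁ ⊓ W₂ = ⊥)
    (K : Set (Fin n → ZMod p)) (hK : K.Finite) (hne : K.Nonempty) :
    K.ncard ^ 3 ≤ (W₁.mkQ '' K).ncard * (W₂.mkQ '' K).ncard *
      ∑ᶠ c : (Fin n → ZMod p) ⧸ (W₁ ⊔ W₂),
        (K ∩ (W₁ ⊔ W₂).mkQ ⁻¹' {c}).ncard ^ 2 :=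
  stmt12_general p n W₁ W₂ h K hK
end

section
/- Let $W_1 \in Gr(n, n-m_1)$, $W_2 \in Gr(n, n-m_2)$ be subspaces of $\mathbb{F}_p^n$ with $W_1 \cap W_2 = 0$, and suppose $|\pi^{W_1}(K)| \leq M_1$ and $|\pi^{W_2}(K)| \leq M_2$ for a finite set $K \subseteq \mathbb{F}_p^n$. Then there exists $K' \subseteq K$ with $|K'| \geq c|K|/\log p$ (for an absolute constant $c > 0$, assuming $p \geq 3$) such that $|\pi^{W_1+W_2}(K')| \leq C M_1 M_2 / |K'|$ for an absolute constant $C$. -/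
/-!
For `z` in `π^{W₁+W₂}(K)` let `F_z` be the fibre of `K` over `z`. As `W₁ ∩ W₂ = 0`, a point is
determined by its two projections, so `|F_z| ≤ a_z b_z` with `a_z = |π^{W₁}(F_z)|`,
`b_z = |π^{W₂}(F_z)|`; the sets `π^{W₁}(F_z)` partition `π^{W₁}(K)`, so `∑ a_z ≤ M₁`, and likewise
`∑ b_z ≤ M₂`. By Cauchy–Schwarz `∑ √|F_z| ≤ √(M₁M₂)`. Keeping only the fibres with
`√|F_z| ≥ |K| / (2√(M₁M₂))` loses at most half of `K` and leaves at most `2M₁M₂/|K|` fibres.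
-/

open Finset

lemma exists_subset_sum_sq_le_two_mul_and_card_mul_le {ι : Type*} (s : Finset ι) (g : ι → ℝ)
    (hg : ∀ i ∈ s, 0 ≤ g i) {S : ℝ} (hS : 0 < S) (hgS : ∑ i ∈ s, g i ≤ S) :
    ∃ t ⊆ s, ∑ i ∈ s, g i ^ 2 ≤ 2 * ∑ i ∈ t, g i ^ 2 ∧
      #t * ∑ i ∈ s, g i ^ 2 ≤ 2 * S ^ 2 := by
  classical
  set N := ∑ i ∈ s, g i ^ 2
  -- terms with `g i < r` contribute at most `r * S = N / 2`, and at most `S / r` terms have `r ≤ g i`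
  set r := N / (2 * S)
  have hrS : r * (2 * S) = N := div_mul_cancel₀ N (by positivity)
  refine ⟨{i ∈ s | r ≤ g i}, filter_subset _ _, ?_, ?_⟩
  · have hlight : ∑ i ∈ s with ¬ r ≤ g i, g i ^ 2 ≤ r * S := calc
      ∑ i ∈ s with ¬ r ≤ g i, g i ^ 2 ≤ ∑ i ∈ s with ¬ r ≤ g i, r * g i := by
        refine sum_le_sum fun i hi => ?_
        obtain ⟨his, hlt⟩ := mem_filter.mp hi
        rw [sq]
        exact mul_le_mul_of_nonneg_right (le_of_not_ge hlt) (hg i his)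
      _ ≤ ∑ i ∈ s, r * g i :=
        sum_le_sum_of_subset_of_nonneg (filter_subset _ _)
          fun i hi _ => mul_nonneg (by positivity) (hg i hi)
      _ ≤ r * S := by rw [← mul_sum]; exact mul_le_mul_of_nonneg_left hgS (by positivity)
    have hsplit := sum_filter_add_sum_filter_not s (fun i => r ≤ g i) (fun i => g i ^ 2)
    nlinarith
  · have hheavy : #{i ∈ s | r ≤ g i} * r ≤ S := calc
      #{i ∈ s | r ≤ g i} * r = ∑ i ∈ s with r ≤ g i, r := by rw [sum_const, nsmul_eq_mul]
      _ ≤ ∑ i ∈ s with r ≤ g i, g i := sum_le_sum fun i hi => (mem_filter.mp hi).2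
      _ ≤ ∑ i ∈ s, g i := sum_le_sum_of_subset_of_nonneg (filter_subset _ _) fun i hi _ => hg i hi
      _ ≤ S := hgS
    nlinarith

lemma card_le_card_image_mul_card_image {α β₁ β₂ : Type*} [DecidableEq β₁] [DecidableEq β₂]
    {A : Finset α} {π₁ : α → β₁} {π₂ : α → β₂}
    (hinj : Set.InjOn (fun x => (π₁ x, π₂ x)) A) :
    #A ≤ #(A.image π₁) * #(A.image π₂) := by
  rw [← card_product]
  exact card_le_card_of_injOn _
    (fun x hx => mem_product.mpr ⟨mem_image_of_mem _ hx, mem_image_of_mem _ hx⟩) hinj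

lemma sum_card_image_fiber_eq {α β γ : Type*} [DecidableEq β] [DecidableEq γ]
    (A : Finset α) {π : α → γ} {π₁ : α → β} {g : β → γ} (h : ∀ x, g (π₁ x) = π x) :
    ∑ z ∈ A.image π, #({x ∈ A | π x = z}.image π₁) = #(A.image π₁) := by
  have hfiber : ∀ z, {x ∈ A | π x = z}.image π₁ = {y ∈ A.image π₁ | g y = z} := fun z => by
    simp only [filter_image, h]
  simp only [hfiber]
  refine (card_eq_sum_card_fiberwise fun y hy => ?_).symm
  obtain ⟨x, hx, rfl⟩ := mem_image.mp hy
  exact h x ▸ mem_image_of_mem π hx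

lemma exists_subset_two_mul_card_ge_and_card_image_mul_le {α β₁ β₂ γ : Type*} [DecidableEq β₁]
    [DecidableEq β₂] [DecidableEq γ] (A : Finset α) {π : α → γ} {π₁ : α → β₁} {π₂ : α → β₂}
    {g₁ : β₁ → γ} {g₂ : β₂ → γ} (h₁ : ∀ x, g₁ (π₁ x) = π x) (h₂ : ∀ x, g₂ (π₂ x) = π x)
    (hinj : Set.InjOn (fun x => (π₁ x, π₂ x)) A) :
    ∃ A' ⊆ A, #A ≤ 2 * #A' ∧ #(A'.image π) * #A ≤ 2 * #(A.image π₁) * #(A.image π₂) := by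
  obtain rfl | hA := A.eq_empty_or_nonempty
  · exact ⟨∅, subset_refl _, by simp⟩
  set fiber : γ → Finset α := fun z => {x ∈ A | π x = z}
  have hfiber : ∀ z, (#(fiber z) : ℝ) ≤ #((fiber z).image π₁) * #((fiber z).image π₂) :=
    fun z => by exact_mod_cast card_le_card_image_mul_card_image (hinj.mono (filter_subset _ _))
  have hsum₁ : ∑ z ∈ A.image π, (#((fiber z).image π₁) : ℝ) = #(A.image π₁) := by
    exact_mod_cast sum_card_image_fiber_eq A h₁
  have hsum₂ : ∑ z ∈ A.image π, (#((fiber z).image π₂) : ℝ) = #(A.image π₂) := by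
    exact_mod_cast sum_card_image_fiber_eq A h₂
  have hcs : ∑ z ∈ A.image π, √(#(fiber z) : ℝ) ≤ √(#(A.image π₁) : ℝ) * √(#(A.image π₂) : ℝ) := calc
    ∑ z ∈ A.image π, √(#(fiber z) : ℝ)
        ≤ ∑ z ∈ A.image π, √(#((fiber z).image π₁) : ℝ) * √(#((fiber z).image π₂) : ℝ) :=
      sum_le_sum fun z _ => by rw [← Real.sqrt_mul (Nat.cast_nonneg _)]; exact Real.sqrt_le_sqrt (hfiber z)
    _ ≤ _ := by
      rw [← hsum₁, ← hsum₂]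
      exact Real.sum_sqrt_mul_sqrt_le _ (fun _ => Nat.cast_nonneg _) fun _ => Nat.cast_nonneg _
  have hpos : 0 < √(#(A.image π₁) : ℝ) * √(#(A.image π₂) : ℝ) := by
    have := hA.image π₁; have := hA.image π₂; positivity
  obtain ⟨t, -, hlarge, hcard⟩ :=
    exists_subset_sum_sq_le_two_mul_and_card_mul_le _ _ (fun _ _ => Real.sqrt_nonneg _) hpos hcs
  have hsq : ∀ s : Finset γ, ∑ z ∈ s, √(#(fiber z) : ℝ) ^ 2 = #{x ∈ A | π x ∈ s} := fun s => by
    simp only [Real.sq_sqrt (Nat.cast_nonneg _), fiber]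
    exact_mod_cast sum_card_fiberwise_eq_card_filter A s π
  have hA_eq : {x ∈ A | π x ∈ A.image π} = A := filter_true_of_mem fun x hx => mem_image_of_mem π hx
  rw [hsq, hsq, hA_eq] at hlarge
  rw [hsq, hA_eq, mul_pow, Real.sq_sqrt (Nat.cast_nonneg _), Real.sq_sqrt (Nat.cast_nonneg _)] at hcard
  refine ⟨{x ∈ A | π x ∈ t}, filter_subset _ _, by exact_mod_cast hlarge, ?_⟩
  have himage : #({x ∈ A | π x ∈ t}.image π) ≤ #t :=
    card_le_card fun z hz => by obtain ⟨x, hx, rfl⟩ := mem_image.mp hz; exact (mem_filter.mp hx).2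
  calc #({x ∈ A | π x ∈ t}.image π) * #A ≤ #t * #A := Nat.mul_le_mul_right _ himage
    _ ≤ 2 * #(A.image π₁) * #(A.image π₂) := by rw [mul_assoc]; exact_mod_cast hcard

lemma Submodule.injective_mkQ_prod_mkQ_s13 {R M : Type*} [Ring R] [AddCommGroup M] [Module R M]
    {W₁ W₂ : Submodule R M} (h : W₁ ⊓ W₂ = ⊥) : Function.Injective (W₁.mkQ.prod W₂.mkQ) := by
  rw [← LinearMap.ker_eq_bot, LinearMap.ker_prod, ker_mkQ, ker_mkQ, h]

lemma Real.one_le_log_of_three_le {x : ℝ} (hx : 3 ≤ x) : 1 ≤ Real.log x := by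
  rw [Real.le_log_iff_exp_le (by linarith)]
  exact Real.exp_one_lt_three.le.trans hx

theorem stmt13 :
    ∃ c : ℝ, 0 < c ∧ ∃ C : ℝ, 0 < C ∧
      ∀ (p n m₁ m₂ : ℕ), p.Prime → 3 ≤ p → n < m₁ + m₂ → m₁ ≤ n → m₂ ≤ n →
      ∀ (W₁ W₂ : Submodule (ZMod p) (Fin n → ZMod p)),
        Module.finrank (ZMod p) W₁ = n - m₁ →
        Module.finrank (ZMod p) W₂ = n - m₂ →
        W₁ ⊓ W₂ = ⊥ →
      ∀ (K : Set (Fin n → ZMod p)) (M₁ M₂ : ℕ), K.Finite → K.Nonempty →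
        (W₁.mkQ '' K).ncard ≤ M₁ → (W₂.mkQ '' K).ncard ≤ M₂ →
        ∃ K' ⊆ K, c * K.ncard / Real.log p ≤ (K'.ncard : ℝ) ∧
          (((W₁ ⊔ W₂).mkQ '' K').ncard : ℝ) ≤ C * M₁ * M₂ / K'.ncard := by
  refine ⟨1 / 2, by norm_num, 2, by norm_num, ?_⟩
  intro p n m₁ m₂ _ hp _ _ _ W₁ W₂ _ _ hW K M₁ M₂ hK hK₀ hM₁ hM₂
  classical
  lift K to Finset (Fin n → ZMod p) using hK
  obtain ⟨K', hK'K, hlarge, himage⟩ := exists_subset_two_mul_card_ge_and_card_image_mul_le K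
    (Submodule.factor_mk le_sup_left) (Submodule.factor_mk le_sup_right)
    (Submodule.injective_mkQ_prod_mkQ_s13 hW).injOn
  simp only [← coe_image, Set.ncard_coe_finset] at hM₁ hM₂
  refine ⟨K', by exact_mod_cast hK'K, ?_⟩
  simp only [← coe_image, Set.ncard_coe_finset]
  have hK'₀ : (0 : ℝ) < #K' := by
    have : 0 < #K := card_pos.mpr (coe_nonempty.mp hK₀)
    exact_mod_cast (by omega : 0 < #K')
  constructor
  · calc 1 / 2 * (#K : ℝ) / Real.log p ≤ 1 / 2 * #K :=
          div_le_self (by positivity) (Real.one_le_log_of_three_le (by exact_mod_cast hp))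
      _ ≤ #K' := by
          have : (#K : ℝ) ≤ 2 * #K' := by exact_mod_cast hlarge
          linarith
  · rw [le_div_iff₀ hK'₀]
    calc (#(K'.image (W₁ ⊔ W₂).mkQ) * #K' : ℝ) ≤ #(K'.image (W₁ ⊔ W₂).mkQ) * #K := by
          gcongr
      _ ≤ 2 * #(K.image W₁.mkQ) * #(K.image W₂.mkQ) := by exact_mod_cast himage
      _ ≤ 2 * M₁ * M₂ := by gcongr
end
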